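/- arXiv:2503.00787 — 2 statements merged into one kernel-verified Lean document; each statement's English description precedes it below -/
import Mathlib

section
/- Let g ≥ 2 be an integer, let D > 3 be a squarefree positive integer, and let X, Y be positive integers with X² + D = 4Y^g. Then X is odd, D ≡ 3 (mod 4), gcd(X, Y) = 1, the element (X + √−D)/2 lies in the ring of integers O of the imaginary quadratic field K = ℚ(√−D), and there exists an integral ideal 𝔞 of O such that 𝔞^g equals the principal ideal generated by (X + √−D)/2; in particular the absolute norm of 𝔞 equals Y. -/
/-!
Reducing `X² + D = 4Yᵍ` modulo 4 and modulo squares of common divisors, using that `D` is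
squarefree, gives the parity, congruence and coprimality claims. In `𝓞 K` the element
`β = (X + √-D)/2` is a root of `T² - XT + Yᵍ`, so `β * (X - β) = Yᵍ`. The two factors sum to `X`
and their difference squares to `-D`, which is coprime to `X`, so they are coprime; unique
factorisation of ideals in the Dedekind domain `𝓞 K` then makes `(β)` a `g`-th power `𝔞ᵍ`.
Finally `N(β) = Yᵍ` is the constant term of the minimal polynomial, whence `N𝔞 = Y`.
-/

open NumberField IntermediateField Polynomial

/-- The complex number `√-d = i·√d`. -/
noncomputable def sqrtNeg (d : ℕ) : ℂ := Complex.I * Real.sqrt d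

theorem isIntegral_sqrtNeg (d : ℕ) : IsIntegral ℚ (sqrtNeg d) := by
  refine ⟨X ^ 2 + C (d : ℚ), monic_X_pow_add_C _ two_ne_zero, ?_⟩
  have h : ((Real.sqrt d : ℝ) : ℂ) ^ 2 = (d : ℂ) := by
    rw [← Complex.ofReal_pow, Real.sq_sqrt (Nat.cast_nonneg d)]
    simp
  simp only [eval₂_add, eval₂_pow, eval₂_X, eval₂_C, sqrtNeg, mul_pow, Complex.I_sq, h]
  push_cast
  ring

/-- The imaginary quadratic field `K = ℚ(√-d)`, realized inside `ℂ`. -/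
noncomputable def Kneg (d : ℕ) : IntermediateField ℚ ℂ := ℚ⟮sqrtNeg d⟯

instance (d : ℕ) : FiniteDimensional ℚ (Kneg d) :=
  IntermediateField.adjoin.finiteDimensional (isIntegral_sqrtNeg d)

instance (d : ℕ) : NumberField (Kneg d) := ⟨⟩

theorem odd_of_sq_add_eq_four_mul {x D n : ℕ} (hD : Squarefree D) (h : x ^ 2 + D = 4 * n) :
    Odd x := by
  rw [← Nat.not_even_iff_odd]
  rintro ⟨k, rfl⟩
  have h4 : 2 * 2 ∣ (k + k) ^ 2 + D := h ▸ dvd_mul_right 4 n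
  have h4D : 2 * 2 ∣ D := (Nat.dvd_add_right ⟨k ^ 2, by ring⟩).mp h4
  simpa using hD 2 h4D

theorem mod_four_eq_three_of_sq_add_eq_four_mul {x D n : ℕ} (hx : Odd x)
    (h : x ^ 2 + D = 4 * n) : D % 4 = 3 := by
  obtain ⟨k, rfl⟩ := hx
  have : (2 * k + 1) ^ 2 = 4 * (k ^ 2 + k) + 1 := by ring
  omega

theorem coprime_of_sq_add_eq_four_mul_pow {x y D g : ℕ} (hD : Squarefree D) (hg : 2 ≤ g)
    (h : x ^ 2 + D = 4 * y ^ g) : Nat.Coprime x y := by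
  set p := Nat.gcd x y
  have hx : p * p ∣ x ^ 2 := sq x ▸ mul_dvd_mul (Nat.gcd_dvd_left x y) (Nat.gcd_dvd_left x y)
  have hy : p * p ∣ 4 * y ^ g := Dvd.dvd.mul_left
    ((sq p ▸ pow_dvd_pow_of_dvd (Nat.gcd_dvd_right x y) 2).trans (pow_dvd_pow y hg)) 4
  exact Nat.isUnit_iff.mp (hD p ((Nat.dvd_add_right hx).mp (h ▸ hy)))

theorem coprime_of_sq_add_eq_four_mul {x D n : ℕ} (hx : Odd x) (hxn : Nat.Coprime x n)
    (h : x ^ 2 + D = 4 * n) : Nat.Coprime x D := by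
  have h4 : Nat.Coprime x (4 * n) :=
    Nat.Coprime.mul_right (by simpa using (Nat.coprime_two_right.mpr hx).pow_right 2) hxn
  rwa [← h, sq, add_comm, Nat.coprime_add_mul_left_right] at h4

theorem IsCoprime.of_isCoprime_add_sub_sq {R : Type*} [CommRing R] {a b : R}
    (h : IsCoprime (a + b) ((a - b) ^ 2)) : IsCoprime a b := by
  obtain ⟨u, v, huv⟩ := h
  exact ⟨u + v * (a - b), u - v * (a - b), by linear_combination huv⟩

theorem Ideal.exists_pow_eq_span_singleton_of_mul_eq_pow {R : Type*} [CommRing R]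
    [IsDedekindDomain R] {a b c : R} {n : ℕ} (hab : IsCoprime a b) (h : a * b = c ^ n) :
    ∃ 𝔞 : Ideal R, 𝔞 ^ n = Ideal.span {a} := by
  let := UniqueFactorizationMonoid.toNormalizedGCDMonoid (Ideal R)
  obtain ⟨𝔞, h𝔞⟩ := exists_eq_pow_of_mul_eq_pow_of_coprime
    ((Ideal.isCoprime_span_singleton_iff a b).mpr hab)
    (by rw [Ideal.span_singleton_mul_span_singleton, h, Ideal.span_singleton_pow])
  exact ⟨𝔞, h𝔞.symm⟩

theorem irreducible_X_sq_sub_C_mul_X_add_C {K : Type*} [Field K] [LinearOrder K]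
    [IsStrictOrderedRing K] {t n : K} (h : t ^ 2 < 4 * n) :
    Irreducible (X ^ 2 - C t * X + C n) := by
  have hdeg : (X ^ 2 - C t * X + C n).natDegree = 2 := by compute_degree!
  rw [irreducible_iff_roots_eq_zero_of_degree_le_three (by rw [hdeg]) (by rw [hdeg]; norm_num),
    Multiset.eq_zero_iff_forall_notMem]
  intro r hr
  rw [mem_roots (ne_zero_of_natDegree_gt (n := 0) (by omega)), IsRoot.def] at hr
  simp only [eval_add, eval_sub, eval_mul, eval_pow, eval_X, eval_C] at hr
  nlinarith [sq_nonneg (2 * r - t)]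

theorem Algebra.norm_eq_coeff_zero_minpoly_of_natDegree_eq_finrank {K L : Type*} [Field K]
    [Field L] [Algebra K L] [FiniteDimensional K L] {x : L}
    (h : (minpoly K x).natDegree = Module.finrank K L) :
    Algebra.norm K x = (-1) ^ Module.finrank K L * (minpoly K x).coeff 0 := by
  have hx : IsIntegral K x := .of_finite K x
  have htop : Module.finrank K⟮x⟯ L = 1 := by
    have := Module.finrank_mul_finrank K K⟮x⟯ L
    rw [IntermediateField.adjoin.finrank hx, h] at this
    exact (Nat.mul_eq_left Module.finrank_pos.ne').mp this
  rw [Algebra.norm_eq_norm_adjoin, htop, pow_one, ← IntermediateField.adjoin.powerBasis_gen hx,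
    PowerBasis.norm_gen_eq_coeff_zero_minpoly, IntermediateField.adjoin.powerBasis_gen,
    IntermediateField.minpoly_gen, IntermediateField.adjoin.powerBasis_dim, h]

theorem sqrtNeg_sq (d : ℕ) : sqrtNeg d ^ 2 = -d := by
  rw [sqrtNeg, mul_pow, Complex.I_sq, ← Complex.ofReal_pow, Real.sq_sqrt d.cast_nonneg]
  simp

namespace Kneg

variable (d : ℕ) {x n : ℕ}

noncomputable def gen : Kneg d := ⟨sqrtNeg d, mem_adjoin_simple_self ℚ _⟩

@[simp]
theorem coe_gen : (gen d : ℂ) = sqrtNeg d := rfl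

theorem gen_sq : gen d ^ 2 = -d := Subtype.ext (by push_cast; exact sqrtNeg_sq d)

theorem finrank_le_two : Module.finrank ℚ (Kneg d) ≤ 2 := by
  have hroot : aeval (sqrtNeg d) (X ^ 2 + C (d : ℚ)) = 0 := by simp [sqrtNeg_sq]
  have hmonic : (X ^ 2 + C (d : ℚ)).Monic := monic_X_pow_add_C _ two_ne_zero
  rw [Kneg, IntermediateField.adjoin.finrank (isIntegral_sqrtNeg d),
    ← natDegree_X_pow_add_C (n := 2) (r := (d : ℚ))]
  exact natDegree_le_natDegree (minpoly.min ℚ _ hmonic hroot)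

noncomputable def halfSum (x : ℕ) : Kneg d := (x + gen d) / 2

@[simp]
theorem coe_halfSum (x : ℕ) : (halfSum d x : ℂ) = (x + sqrtNeg d) / 2 := by
  rw [halfSum]
  push_cast
  rfl

variable {d}

theorem halfSum_mul (h : x ^ 2 + d = 4 * n) : halfSum d x * (x - halfSum d x) = n := by
  have h' : (x : Kneg d) ^ 2 + d = 4 * n := by exact_mod_cast h
  rw [halfSum]
  linear_combination h' / 4 - gen_sq d / 4

theorem isIntegral_halfSum (h : x ^ 2 + d = 4 * n) : IsIntegral ℤ (halfSum d x) := by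
  refine ⟨X ^ 2 - C (x : ℤ) * X + C (n : ℤ), by monicity!, ?_⟩
  simp only [eval₂_add, eval₂_sub, eval₂_mul, eval₂_pow, eval₂_X, eval₂_C]
  push_cast
  linear_combination -halfSum_mul h

theorem minpoly_halfSum (hd : 0 < d) (h : x ^ 2 + d = 4 * n) :
    minpoly ℚ (halfSum d x) = X ^ 2 - C (x : ℚ) * X + C (n : ℚ) := by
  have hdisc : (x : ℚ) ^ 2 < 4 * n := by
    have : ((x ^ 2 + d : ℕ) : ℚ) = 4 * n := by exact_mod_cast h
    push_cast at this
    linarith [(Nat.cast_pos (α := ℚ)).mpr hd]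
  refine (minpoly.eq_of_irreducible_of_monic (irreducible_X_sq_sub_C_mul_X_add_C hdisc) ?_
    (by monicity!)).symm
  simp only [map_add, map_sub, map_mul, map_pow, aeval_X, aeval_C, eq_ratCast, Rat.cast_natCast]
  linear_combination -halfSum_mul h

theorem norm_halfSum (hd : 0 < d) (h : x ^ 2 + d = 4 * n) :
    Algebra.norm ℚ (halfSum d x) = n := by
  have hdeg : (minpoly ℚ (halfSum d x)).natDegree = 2 := by
    rw [minpoly_halfSum hd h]; compute_degree!
  have hrank : Module.finrank ℚ (Kneg d) = 2 :=
    le_antisymm (finrank_le_two d) (hdeg ▸ minpoly.natDegree_le _)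
  rw [Algebra.norm_eq_coeff_zero_minpoly_of_natDegree_eq_finrank (hdeg.trans hrank.symm), hrank,
    minpoly_halfSum hd h]
  simp

noncomputable def halfSumInt (h : x ^ 2 + d = 4 * n) : 𝓞 (Kneg d) :=
  ⟨halfSum d x, isIntegral_halfSum h⟩

@[simp]
theorem coe_halfSumInt (h : x ^ 2 + d = 4 * n) : (halfSumInt h : Kneg d) = halfSum d x := rfl

theorem halfSumInt_mul (h : x ^ 2 + d = 4 * n) :
    halfSumInt h * (x - halfSumInt h) = n :=
  RingOfIntegers.coe_injective (by push_cast; exact halfSum_mul h)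

theorem isCoprime_halfSumInt (hxd : Nat.Coprime x d) (h : x ^ 2 + d = 4 * n) :
    IsCoprime (halfSumInt h) (x - halfSumInt h) := by
  refine .of_isCoprime_add_sub_sq ?_
  have hsq : (halfSumInt h - (x - halfSumInt h)) ^ 2 = -(d : 𝓞 (Kneg d)) :=
    RingOfIntegers.coe_injective (by
      push_cast [coe_halfSumInt, halfSum]
      linear_combination gen_sq d)
  rw [add_sub_cancel, hsq]
  simpa using ((Nat.isCoprime_iff_coprime.mpr hxd).map (Int.castRingHom (𝓞 (Kneg d)))).neg_right

theorem absNorm_span_halfSumInt (hd : 0 < d) (h : x ^ 2 + d = 4 * n) :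
    Ideal.absNorm (Ideal.span {halfSumInt h}) = n := by
  have hnorm : (Algebra.norm ℤ (halfSumInt h) : ℚ) = n := by
    rw [Algebra.coe_norm_int]; exact norm_halfSum hd h
  rw [Ideal.absNorm_span_singleton, show Algebra.norm ℤ (halfSumInt h) = n by exact_mod_cast hnorm]
  rfl

end Kneg

theorem stmt5_general (g D X Y : ℕ) (hg : 2 ≤ g) (hsf : Squarefree D)
    (h : X ^ 2 + D = 4 * Y ^ g) :
    Odd X ∧ D % 4 = 3 ∧ Nat.gcd X Y = 1 ∧
    ∃ β : RingOfIntegers (Kneg D), ((β : Kneg D) : ℂ) = ((X : ℂ) + sqrtNeg D) / 2 ∧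
      ∃ 𝔞 : Ideal (RingOfIntegers (Kneg D)),
        𝔞 ^ g = Ideal.span {β} ∧ Ideal.absNorm 𝔞 = Y := by
  have hX : Odd X := odd_of_sq_add_eq_four_mul hsf h
  have hXY : Nat.Coprime X Y := coprime_of_sq_add_eq_four_mul_pow hsf hg h
  have hXD : Nat.Coprime X D := coprime_of_sq_add_eq_four_mul hX (hXY.pow_right g) h
  obtain ⟨𝔞, h𝔞⟩ := Ideal.exists_pow_eq_span_singleton_of_mul_eq_pow
    (Kneg.isCoprime_halfSumInt hXD h) ((Kneg.halfSumInt_mul h).trans (Nat.cast_pow Y g))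
  have hnorm : Ideal.absNorm 𝔞 ^ g = Y ^ g := by
    rw [← map_pow, h𝔞, Kneg.absNorm_span_halfSumInt (Nat.pos_of_ne_zero hsf.ne_zero) h]
  exact ⟨hX, mod_four_eq_three_of_sq_add_eq_four_mul hX h, hXY, Kneg.halfSumInt h, by simp,
    𝔞, h𝔞, Nat.pow_left_injective (by omega) hnorm⟩

theorem stmt5 (g D X Y : ℕ) (hg : 2 ≤ g) (hD : 3 < D) (hsf : Squarefree D)
    (hX : 0 < X) (hY : 0 < Y) (h : X ^ 2 + D = 4 * Y ^ g) :
    Odd X ∧ D % 4 = 3 ∧ Nat.gcd X Y = 1 ∧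
    ∃ β : RingOfIntegers (Kneg D), ((β : Kneg D) : ℂ) = ((X : ℂ) + sqrtNeg D) / 2 ∧
      ∃ 𝔞 : Ideal (RingOfIntegers (Kneg D)),
        𝔞 ^ g = Ideal.span {β} ∧ Ideal.absNorm 𝔞 = Y :=
  stmt5_general g D X Y hg hsf h
end

section
/- Let g ≥ 5 be an integer. There exist constants c₁, c₂ > 0 and X₀ > 0, depending only on g, such that for all real X ≥ X₀ the following holds: for every integer triple (x, y, z) with X^{1/(2(g−1))}/(2⁴g²) < x < ((2^{2g−4}g^{g−2}+1)/(2^{2g}g^g))·X^{1/(2(g−1))}, the same bounds for y, and X^{(g−2)/(2g(g−1))}/2 < z < X^{(g−2)/(2g(g−1))}, one has 0 < f(x,y,z) and c₁·X ≤ f(x,y,z) ≤ c₂·X, where f(x,y,z) = 2(x^g + y^g)z^g − (x − y)² z^{2g} − (Σ_{i=0}^{g−1} x^{g−1−i} y^i)². -/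
/-!
Put `p = X ^ (1 / (2 (g - 1)))`, so that `X = p ^ (2g - 2)` and the box for `z` puts `w = z ^ g`
in `[p ^ (g - 2) / 2 ^ g, p ^ (g - 2)]`. With `z ^ g` replaced by `w`, `f` is homogeneous of
weight `2g - 2` under `(x, y, w) ↦ (p x, p y, p ^ (g - 2) w)`, so it suffices to bound it on the
normalized box `x, y ∈ [A, A + A ^ (g / 2)]`, `w ∈ [2 ^ (-g), 1]` with `A = (4g) ^ (-2)`.
There the leading term `2 (x ^ g + y ^ g) w` is at least `4 A ^ g w`, while each subtracted
square is at most `A ^ g w`: the first since `|x - y| ≤ A ^ (g / 2)`, the second since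
`f₁ ≤ g (2A) ^ (g - 1)` and, for `g ≥ 5`, `g² 2 ^ (3g - 2) ≤ (4g) ^ (2g - 4)`.
-/

/-- `f₁(a,b) = ∑_{i=0}^{g-1} a^{g-1-i} b^i`. -/
def f1 (g : ℕ) (a b : ℤ) : ℤ := ∑ i ∈ Finset.range g, a ^ (g - 1 - i) * b ^ i

/-- `f(a,b,n) = 2(a^g+b^g)n^g - (a-b)² n^{2g} - f₁(a,b)²`. -/
def f (g : ℕ) (a b n : ℤ) : ℤ :=
  2 * (a ^ g + b ^ g) * n ^ g - (a - b) ^ 2 * n ^ (2 * g) - (f1 g a b) ^ 2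

open Finset

section CommRing

variable {R : Type*} [CommRing R]

def fw (g : ℕ) (a b w : R) : R :=
  2 * (a ^ g + b ^ g) * w - (a - b) ^ 2 * w ^ 2 - (∑ i ∈ range g, a ^ (g - 1 - i) * b ^ i) ^ 2

theorem cast_f (g : ℕ) (a b n : ℤ) : ((f g a b n : ℤ) : R) = fw g (a : R) b (n ^ g) := by
  simp only [f, fw, f1]
  push_cast
  ring

theorem sum_pow_mul_pow_mul_left (g : ℕ) (p a b : R) :
    ∑ i ∈ range g, (p * a) ^ (g - 1 - i) * (p * b) ^ i
      = p ^ (g - 1) * ∑ i ∈ range g, a ^ (g - 1 - i) * b ^ i := by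
  rw [mul_sum]
  refine sum_congr rfl fun i hi => ?_
  rw [show p ^ (g - 1) = p ^ (g - 1 - i) * p ^ i by
    rw [← pow_add, Nat.sub_add_cancel (by grind)]]
  ring

theorem fw_mul_mul_pow_mul {g : ℕ} (hg : 2 ≤ g) (p a b w : R) :
    fw g (p * a) (p * b) (p ^ (g - 2) * w) = p ^ (2 * g - 2) * fw g a b w := by
  simp only [fw, sum_pow_mul_pow_mul_left]
  obtain ⟨n, rfl⟩ : ∃ n, g = n + 2 := ⟨g - 2, by omega⟩
  simp only [show n + 2 - 2 = n by omega,
    show 2 * (n + 2) - 2 = 2 * n + 2 by omega, show n + 2 - 1 = n + 1 by omega]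
  ring

end CommRing

section Ordered

variable {R : Type*} [CommRing R] [LinearOrder R] [IsStrictOrderedRing R]

theorem sum_pow_mul_pow_le {a b M : R} (ha : 0 ≤ a) (hb : 0 ≤ b) (haM : a ≤ M) (hbM : b ≤ M)
    (g : ℕ) : ∑ i ∈ range g, a ^ (g - 1 - i) * b ^ i ≤ g * M ^ (g - 1) := by
  have hterm : ∀ i ∈ range g, a ^ (g - 1 - i) * b ^ i ≤ M ^ (g - 1) := fun i hi => by
    calc a ^ (g - 1 - i) * b ^ i ≤ M ^ (g - 1 - i) * M ^ i :=
        mul_le_mul (pow_le_pow_left₀ ha haM _) (pow_le_pow_left₀ hb hbM _) (by positivity)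
          (pow_nonneg (ha.trans haM) _)
      _ = M ^ (g - 1) := by rw [← pow_add, Nat.sub_add_cancel (by grind)]
  simpa using sum_le_card_nsmul _ _ _ hterm

theorem fw_le {g : ℕ} {a b w M : R} (ha : 0 ≤ a) (hb : 0 ≤ b) (haM : a ≤ M) (hbM : b ≤ M)
    (hw1 : w ≤ 1) : fw g a b w ≤ 4 * M ^ g := by
  have hpow : a ^ g + b ^ g ≤ 2 * M ^ g := by
    linarith [pow_le_pow_left₀ ha haM g, pow_le_pow_left₀ hb hbM g]
  have hmain : 2 * (a ^ g + b ^ g) * w ≤ 4 * M ^ g := by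
    nlinarith [pow_nonneg ha g, pow_nonneg hb g]
  unfold fw
  nlinarith [sq_nonneg ((a - b) * w), sq_nonneg (∑ i ∈ range g, a ^ (g - 1 - i) * b ^ i)]

theorem le_fw {g : ℕ} {A a b w : R} (hA : 0 ≤ A) (ha : A ≤ a) (hb : A ≤ b) (ha2 : a ≤ 2 * A)
    (hb2 : b ≤ 2 * A) (hw : 0 ≤ w) (hab : (a - b) ^ 2 * w ≤ A ^ g)
    (hsum : (g * (2 * A) ^ (g - 1)) ^ 2 ≤ A ^ g * w) : 2 * A ^ g * w ≤ fw g a b w := by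
  have ha0 : 0 ≤ a := hA.trans ha
  have hb0 : 0 ≤ b := hA.trans hb
  have hpow : 2 * A ^ g ≤ a ^ g + b ^ g := by
    linarith [pow_le_pow_left₀ hA ha g, pow_le_pow_left₀ hA hb g]
  have hdiff : (a - b) ^ 2 * w ^ 2 ≤ A ^ g * w := by
    rw [sq w, ← mul_assoc]; exact mul_le_mul_of_nonneg_right hab hw
  have hS : (∑ i ∈ range g, a ^ (g - 1 - i) * b ^ i) ^ 2 ≤ A ^ g * w :=
    (pow_le_pow_left₀ (sum_nonneg fun i _ => by positivity)
      (sum_pow_mul_pow_le ha0 hb0 ha2 hb2 g) 2).trans hsum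
  unfold fw
  nlinarith [mul_le_mul_of_nonneg_right hpow hw]

end Ordered

theorem sq_mul_two_pow_le {g : ℕ} (hg : 5 ≤ g) :
    g ^ 2 * 2 ^ (3 * g - 2) ≤ (4 * g) ^ (2 * g - 4) := by
  obtain ⟨n, rfl⟩ : ∃ n, g = n + 5 := ⟨g - 5, by omega⟩
  calc (n + 5) ^ 2 * 2 ^ (3 * (n + 5) - 2) ≤ (n + 5) ^ 2 * 2 ^ (8 * n + 20) := by
        gcongr <;> omega
    _ = (4 * (n + 5)) ^ 2 * (2 ^ 4) ^ (2 * n + 4) := by rw [← pow_mul]; ring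
    _ ≤ (4 * (n + 5)) ^ 2 * (4 * (n + 5)) ^ (2 * n + 4) := by gcongr; norm_num; omega
    _ = (4 * (n + 5)) ^ (2 * (n + 5) - 4) := by
        rw [← pow_add]; congr 1; omega

section Field

variable {R : Type*} [Field R] [LinearOrder R] [IsStrictOrderedRing R]

theorem sq_mul_two_mul_pow_le {g : ℕ} (hg : 5 ≤ g) {A : R} (hA : A = 1 / (4 * g) ^ 2) :
    (g * (2 * A) ^ (g - 1)) ^ 2 ≤ A ^ g / 2 ^ g := by
  have hA0 : 0 < A := by rw [hA]; positivity
  have hnum : ((g ^ 2 * 2 ^ (3 * g - 2) : ℕ) : R) ≤ ((4 * g) ^ (2 * g - 4) : ℕ) :=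
    Nat.cast_le.mpr (sq_mul_two_pow_le hg)
  push_cast at hnum
  have hunit : (4 * g : R) ^ (2 * g - 4) * A ^ (g - 2) = 1 := by
    rw [show 2 * g - 4 = 2 * (g - 2) by omega, pow_mul, ← mul_pow, hA, mul_one_div_cancel
      (by positivity), one_pow]
  have hsplit : (g * (2 * A) ^ (g - 1)) ^ 2
      = g ^ 2 * 2 ^ (3 * g - 2) * A ^ (g - 2) * (A ^ g / 2 ^ g) := by
    obtain ⟨n, rfl⟩ : ∃ n, g = n + 5 := ⟨g - 5, by omega⟩
    simp only [show n + 5 - 1 = n + 4 by omega, show 3 * (n + 5) - 2 = 3 * n + 13 by omega,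
      show n + 5 - 2 = n + 3 by omega]
    field_simp
    ring
  calc (g * (2 * A) ^ (g - 1)) ^ 2
      = g ^ 2 * 2 ^ (3 * g - 2) * A ^ (g - 2) * (A ^ g / 2 ^ g) := hsplit
    _ ≤ (4 * g) ^ (2 * g - 4) * A ^ (g - 2) * (A ^ g / 2 ^ g) := by gcongr
    _ = A ^ g / 2 ^ g := by rw [hunit, one_mul]

theorem fw_bounds_of_normalized {g : ℕ} (hg : 5 ≤ g) {a b w : R}
    (ha : 1 / (4 * g) ^ 2 ≤ a) (ha' : a ≤ 1 / (4 * g) ^ 2 + 1 / (4 * g) ^ g)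
    (hb : 1 / (4 * g) ^ 2 ≤ b) (hb' : b ≤ 1 / (4 * g) ^ 2 + 1 / (4 * g) ^ g)
    (hw : 1 / 2 ^ g ≤ w) (hw1 : w ≤ 1) :
    2 / (2 ^ g * (4 * g) ^ (2 * g)) ≤ fw g a b w ∧
      fw g a b w ≤ 4 * (2 / (4 * g) ^ 2) ^ g := by
  set k : R := 4 * g
  set A : R := 1 / k ^ 2 with hA
  have hk : 1 ≤ k := by
    have : (5 : R) ≤ g := by exact_mod_cast hg
    linarith
  have hA0 : 0 ≤ A := by positivity
  have hgap : 1 / k ^ g ≤ A :=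
    one_div_le_one_div_of_le (by positivity) (pow_le_pow_right₀ hk (by omega))
  have hAg : A ^ g = (1 / k ^ g) ^ 2 := by
    rw [hA, one_div_pow, one_div_pow, ← pow_mul, ← pow_mul, mul_comm]
  have hw0 : 0 ≤ w := le_trans (by positivity) hw
  have hab : (a - b) ^ 2 * w ≤ A ^ g := by
    rw [hAg]
    calc (a - b) ^ 2 * w ≤ (a - b) ^ 2 := mul_le_of_le_one_right (sq_nonneg _) hw1
      _ ≤ (1 / k ^ g) ^ 2 := sq_le_sq' (by linarith) (by linarith)
  have hsum : (g * (2 * A) ^ (g - 1)) ^ 2 ≤ A ^ g * w :=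
    (sq_mul_two_mul_pow_le hg hA).trans (by
      rw [div_eq_mul_one_div]; exact mul_le_mul_of_nonneg_left hw (by positivity))
  constructor
  · calc 2 / (2 ^ g * k ^ (2 * g)) = 2 * A ^ g * (1 / 2 ^ g) := by
          rw [hA, one_div_pow, ← pow_mul]; field_simp
      _ ≤ 2 * A ^ g * w := by gcongr
      _ ≤ fw g a b w := le_fw hA0 ha hb (by linarith) (by linarith) hw0 hab hsum
  · calc fw g a b w ≤ 4 * (2 * A) ^ g :=
          fw_le (hA0.trans ha) (hA0.trans hb) (by linarith) (by linarith) hw1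
      _ = 4 * (2 / k ^ 2) ^ g := by rw [hA, mul_one_div]

theorem fw_bounds {g : ℕ} (hg : 5 ≤ g) {p a b w : R} (hp : 0 < p)
    (ha : p / (4 * g) ^ 2 ≤ a) (ha' : a ≤ (1 / (4 * g) ^ 2 + 1 / (4 * g) ^ g) * p)
    (hb : p / (4 * g) ^ 2 ≤ b) (hb' : b ≤ (1 / (4 * g) ^ 2 + 1 / (4 * g) ^ g) * p)
    (hw : p ^ (g - 2) / 2 ^ g ≤ w) (hw1 : w ≤ p ^ (g - 2)) :
    2 / (2 ^ g * (4 * g) ^ (2 * g)) * p ^ (2 * g - 2) ≤ fw g a b w ∧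
      fw g a b w ≤ 4 * (2 / (4 * g) ^ 2) ^ g * p ^ (2 * g - 2) := by
  have hpg : 0 < p ^ (g - 2) := by positivity
  have hscale : fw g a b w = p ^ (2 * g - 2) * fw g (a / p) (b / p) (w / p ^ (g - 2)) := by
    rw [← fw_mul_mul_pow_mul (by omega), mul_div_cancel₀ _ hp.ne', mul_div_cancel₀ _ hp.ne',
      mul_div_cancel₀ _ hpg.ne']
  obtain ⟨hlow, hup⟩ :=
    fw_bounds_of_normalized hg (a := a / p) (b := b / p) (w := w / p ^ (g - 2))
    (by rwa [le_div_iff₀ hp, one_div_mul_eq_div]) (by rwa [div_le_iff₀ hp])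
    (by rwa [le_div_iff₀ hp, one_div_mul_eq_div]) (by rwa [div_le_iff₀ hp])
    (by rwa [le_div_iff₀ hpg, one_div_mul_eq_div]) (by rwa [div_le_one hpg])
  rw [hscale, mul_comm _ (p ^ _), mul_comm _ (p ^ _)]
  exact ⟨by gcongr, by gcongr⟩

theorem two_pow_mul_pow_add_one_div {g : ℕ} (hg : 2 ≤ g) :
    ((2 : R) ^ (2 * g - 4) * g ^ (g - 2) + 1) / (2 ^ (2 * g) * g ^ g)
      = 1 / (4 * g) ^ 2 + 1 / (4 * g) ^ g := by
  rw [show (2 : R) ^ (2 * g - 4) * g ^ (g - 2) = (4 * g) ^ (g - 2) by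
      rw [mul_pow, show 2 * g - 4 = 2 * (g - 2) by omega, pow_mul]; norm_num,
    show (2 : R) ^ (2 * g) * g ^ g = (4 * g) ^ g by rw [mul_pow, pow_mul]; norm_num,
    show (4 * g : R) ^ g = (4 * g) ^ (g - 2) * (4 * g) ^ 2 by
      rw [← pow_add, Nat.sub_add_cancel hg]]
  field_simp

end Field

theorem rpow_pow_two_mul_sub_two {X : ℝ} (hX : 0 ≤ X) {g : ℕ} (hg : 2 ≤ g) :
    (X ^ ((1 : ℝ) / (2 * ((g : ℝ) - 1)))) ^ (2 * g - 2) = X := by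
  have : (g : ℝ) - 1 ≠ 0 := by
    have : (2 : ℝ) ≤ g := by exact_mod_cast hg
    linarith
  rw [← Real.rpow_natCast, ← Real.rpow_mul hX, Nat.cast_sub (by omega)]
  push_cast
  rw [show 1 / (2 * ((g : ℝ) - 1)) * (2 * g - 2) = 1 by field_simp, Real.rpow_one]

theorem rpow_pow_eq_rpow_pow {X : ℝ} (hX : 0 ≤ X) {g : ℕ} (hg : 2 ≤ g) :
    (X ^ (((g : ℝ) - 2) / (2 * g * ((g : ℝ) - 1)))) ^ g
      = (X ^ ((1 : ℝ) / (2 * ((g : ℝ) - 1)))) ^ (g - 2) := by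
  have : (2 : ℝ) ≤ g := by exact_mod_cast hg
  rw [← Real.rpow_natCast, ← Real.rpow_natCast, ← Real.rpow_mul hX, ← Real.rpow_mul hX,
    Nat.cast_sub hg]
  congr 1
  field_simp
  push_cast
  ring

theorem stmt10 (g : ℕ) (hg : 5 ≤ g) :
    ∃ c₁ c₂ X₀ : ℝ, 0 < c₁ ∧ 0 < c₂ ∧ 0 < X₀ ∧ ∀ X : ℝ, X₀ ≤ X →
      ∀ x y z : ℤ,
        X ^ ((1:ℝ) / (2 * ((g:ℝ) - 1))) / (2 ^ 4 * (g:ℝ) ^ 2) < (x : ℝ) →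
        (x : ℝ) < ((2:ℝ) ^ (2 * g - 4) * (g:ℝ) ^ (g - 2) + 1) / ((2:ℝ) ^ (2 * g) * (g:ℝ) ^ g)
          * X ^ ((1:ℝ) / (2 * ((g:ℝ) - 1))) →
        X ^ ((1:ℝ) / (2 * ((g:ℝ) - 1))) / (2 ^ 4 * (g:ℝ) ^ 2) < (y : ℝ) →
        (y : ℝ) < ((2:ℝ) ^ (2 * g - 4) * (g:ℝ) ^ (g - 2) + 1) / ((2:ℝ) ^ (2 * g) * (g:ℝ) ^ g)
          * X ^ ((1:ℝ) / (2 * ((g:ℝ) - 1))) →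
        X ^ (((g:ℝ) - 2) / (2 * (g:ℝ) * ((g:ℝ) - 1))) / 2 < (z : ℝ) →
        (z : ℝ) < X ^ (((g:ℝ) - 2) / (2 * (g:ℝ) * ((g:ℝ) - 1))) →
        0 < f g x y z ∧ c₁ * X ≤ (f g x y z : ℝ) ∧ (f g x y z : ℝ) ≤ c₂ * X := by
  refine ⟨2 / (2 ^ g * (4 * g) ^ (2 * g)), 4 * (2 / (4 * g) ^ 2) ^ g, 1,
    by positivity, by positivity, one_pos, ?_⟩
  intro X hX x y z hx hx' hy hy' hz hz'
  have hX0 : 0 < X := one_pos.trans_le hX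
  set p := X ^ ((1 : ℝ) / (2 * ((g : ℝ) - 1)))
  set q := X ^ (((g : ℝ) - 2) / (2 * (g : ℝ) * ((g : ℝ) - 1)))
  have hsq : (2 : ℝ) ^ 4 * g ^ 2 = (4 * g) ^ 2 := by ring
  rw [hsq] at hx hy
  rw [two_pow_mul_pow_add_one_div (by omega)] at hx' hy'
  have hz0 : 0 ≤ q / 2 := by positivity
  have hw : p ^ (g - 2) / 2 ^ g ≤ (z : ℝ) ^ g := by
    rw [← rpow_pow_eq_rpow_pow hX0.le (by omega), ← div_pow]
    exact pow_le_pow_left₀ hz0 hz.le g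
  have hw1 : (z : ℝ) ^ g ≤ p ^ (g - 2) := by
    rw [← rpow_pow_eq_rpow_pow hX0.le (by omega)]
    exact pow_le_pow_left₀ (hz0.trans hz.le) hz'.le g
  have hbounds := fw_bounds hg (by positivity) hx.le hx'.le hy.le hy'.le hw hw1
  rw [rpow_pow_two_mul_sub_two hX0.le (by omega), ← cast_f] at hbounds
  exact ⟨by exact_mod_cast (by positivity : (0 : ℝ) < _).trans_le hbounds.1, hbounds⟩
end
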